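/- arXiv:2511.16253 — 4 statements merged into one kernel-verified Lean document; each statement's English description precedes it below -/
import Mathlib

section
/- Let n ≥ 1, β > 0, T > 0, and let P be a real symmetric positive definite n×n matrix with smallest eigenvalue λ_min(P) and largest eigenvalue λ_max(P). Let (l_k)_{k∈ℕ} be a sequence of positive natural numbers, (Φ_k)_{k∈ℕ} real n×n matrices, and (x_k)_{k∈ℕ} in ℝ^n with x_{k+1} = Φ_k x_k and x_kᵀ Φ_kᵀ P Φ_k x_k ≤ e^{−β l_k T} · x_kᵀ P x_k for all k. Define τ_k = T · Σ_{j<k} l_j. Then for every k ∈ ℕ, ‖x_k‖ ≤ √(λ_max(P)/λ_min(P)) · e^{−(β/2) τ_k} · ‖x_0‖; in particular the closed-loop sampled-data system is exponentially stable with decay rate β/2. -/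
/-!
The Lyapunov function `V x = xᵀ P x` is squeezed between `λ_min ‖x‖²` and `λ_max ‖x‖²`: by the
spectral theorem, `P - λ_min • 1` and `λ_max • 1 - P` are unitary conjugates of diagonal matrices
with nonnegative entries, hence positive semidefinite. The per-horizon decrease telescopes to
`V (x k) ≤ e^{-β τ_k} V (x 0)`, and comparing the two ends through the squeeze gives the bound.
-/

open Matrix Unitary
open scoped ComplexOrder

namespace Matrix.IsHermitian
variable {𝕜 ι : Type*} [RCLike 𝕜] [Fintype ι] [DecidableEq ι] {A : Matrix ι ι 𝕜}

lemma sub_smul_one_eq_conj (hA : A.IsHermitian) (c : ℝ) :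
    A - (c : 𝕜) • 1 = conjStarAlgAut 𝕜 _ hA.eigenvectorUnitary
      (diagonal (RCLike.ofReal ∘ (hA.eigenvalues - Function.const ι c))) := by
  have hdiag : diagonal (RCLike.ofReal ∘ (hA.eigenvalues - Function.const ι c)) =
      diagonal (RCLike.ofReal ∘ hA.eigenvalues) - (c : 𝕜) • (1 : Matrix ι ι 𝕜) := by
    rw [← diagonal_one, ← diagonal_smul, diagonal_sub]
    congr 1; ext i; simp
  conv_lhs => rw [hA.spectral_theorem]
  rw [hdiag, map_sub, map_smul, map_one]

lemma posSemidef_sub_smul_one {c : ℝ} (hA : A.IsHermitian) (hc : ∀ i, c ≤ hA.eigenvalues i) :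
    (A - (c : 𝕜) • 1).PosSemidef := by
  rw [hA.sub_smul_one_eq_conj, conjStarAlgAut_apply]
  simp [isUnit_coe.posSemidef_star_right_conjugate_iff, hc]

lemma posSemidef_smul_one_sub {c : ℝ} (hA : A.IsHermitian) (hc : ∀ i, hA.eigenvalues i ≤ c) :
    ((c : 𝕜) • 1 - A).PosSemidef := by
  rw [← neg_sub, hA.sub_smul_one_eq_conj, ← map_neg, diagonal_neg, conjStarAlgAut_apply]
  simp [isUnit_coe.posSemidef_star_right_conjugate_iff, hc]

end Matrix.IsHermitian

namespace Matrix
variable {ι : Type*} [Fintype ι] [DecidableEq ι] {A : Matrix ι ι ℝ}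

lemma IsHermitian.iInf_eigenvalues_mul_le (hA : A.IsHermitian) [Nonempty ι] (v : ι → ℝ) :
    (⨅ i, hA.eigenvalues i) * (v ⬝ᵥ v) ≤ v ⬝ᵥ A *ᵥ v := by
  have := (hA.posSemidef_sub_smul_one
    fun i ↦ ciInf_le (Set.finite_range _).bddBelow i).dotProduct_mulVec_nonneg v
  simpa [sub_mulVec, dotProduct_sub, smul_mulVec] using this

lemma IsHermitian.le_iSup_eigenvalues_mul (hA : A.IsHermitian) (v : ι → ℝ) :
    v ⬝ᵥ A *ᵥ v ≤ (⨆ i, hA.eigenvalues i) * (v ⬝ᵥ v) := by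
  have := (hA.posSemidef_smul_one_sub
    fun i ↦ le_ciSup (Set.finite_range _).bddAbove i).dotProduct_mulVec_nonneg v
  simpa [sub_mulVec, dotProduct_sub, smul_mulVec] using this

end Matrix

lemma EuclideanSpace.dotProduct_self_eq_norm_sq {ι : Type*} [Fintype ι]
    (x : EuclideanSpace ℝ ι) : x ⬝ᵥ x = ‖x‖ ^ 2 := by
  rw [← real_inner_self_eq_norm_sq, EuclideanSpace.inner_eq_star_dotProduct, star_trivial]

namespace Matrix.PosDef
variable {ι : Type*} [Fintype ι] [DecidableEq ι] [Nonempty ι] {A : Matrix ι ι ℝ}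

lemma iInf_eigenvalues_pos (hA : A.PosDef) : 0 < ⨅ i, hA.1.eigenvalues i := by
  obtain ⟨i, hi⟩ := exists_eq_ciInf_of_finite (f := hA.1.eigenvalues)
  exact hi ▸ hA.eigenvalues_pos i

lemma norm_le_of_dotProduct_mulVec_le (hA : A.PosDef) {x y : EuclideanSpace ℝ ι} {c : ℝ}
    (hc : 0 ≤ c) (h : y ⬝ᵥ A *ᵥ y ≤ c ^ 2 * (x ⬝ᵥ A *ᵥ x)) :
    ‖y‖ ≤ √((⨆ i, hA.1.eigenvalues i) / ⨅ i, hA.1.eigenvalues i) * c * ‖x‖ := by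
  set lmin := ⨅ i, hA.1.eigenvalues i
  set lmax := ⨆ i, hA.1.eigenvalues i
  have hmin : 0 < lmin := hA.iInf_eigenvalues_pos
  have hmax : lmin ≤ lmax :=
    ciInf_le_ciSup (Set.finite_range _).bddBelow (Set.finite_range _).bddAbove
  have key : lmin * ‖y‖ ^ 2 ≤ c ^ 2 * (lmax * ‖x‖ ^ 2) := by
    rw [← EuclideanSpace.dotProduct_self_eq_norm_sq, ← EuclideanSpace.dotProduct_self_eq_norm_sq]
    calc lmin * (y ⬝ᵥ y) ≤ y ⬝ᵥ A *ᵥ y := hA.1.iInf_eigenvalues_mul_le y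
      _ ≤ c ^ 2 * (x ⬝ᵥ A *ᵥ x) := h
      _ ≤ c ^ 2 * (lmax * (x ⬝ᵥ x)) := by gcongr; exact hA.1.le_iSup_eigenvalues_mul x
  rw [← pow_le_pow_iff_left₀ (norm_nonneg y) (by positivity) two_ne_zero, mul_pow, mul_pow,
    Real.sq_sqrt (div_nonneg (hmin.le.trans hmax) hmin.le), div_mul_eq_mul_div,
    div_mul_eq_mul_div, le_div_iff₀ hmin]
  linarith

end Matrix.PosDef

lemma le_exp_neg_sum_mul_of_le_exp_neg_mul {V a : ℕ → ℝ}
    (h : ∀ k, V (k + 1) ≤ Real.exp (-a k) * V k) (k : ℕ) :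
    V k ≤ Real.exp (-∑ j ∈ Finset.range k, a j) * V 0 := by
  induction k with
  | zero => simp
  | succ k ih =>
    calc V (k + 1) ≤ Real.exp (-a k) * V k := h k
      _ ≤ Real.exp (-a k) * (Real.exp (-∑ j ∈ Finset.range k, a j) * V 0) := by gcongr
      _ = Real.exp (-∑ j ∈ Finset.range (k + 1), a j) * V 0 := by
        rw [← mul_assoc, ← Real.exp_add, Finset.sum_range_succ, neg_add, add_comm]

theorem stmt1_general (n : ℕ) (hn : 1 ≤ n) (β T : ℝ)
    (P : Matrix (Fin n) (Fin n) ℝ) (hP : P.PosDef)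
    (l : ℕ → ℕ)
    (Φ : ℕ → Matrix (Fin n) (Fin n) ℝ)
    (x : ℕ → EuclideanSpace ℝ (Fin n))
    (hx : ∀ k, x (k + 1) = (WithLp.toLp 2 ((Φ k).mulVec (x k)) : EuclideanSpace ℝ (Fin n)))
    (hdec : ∀ k, ((Φ k).mulVec (x k)) ⬝ᵥ P.mulVec ((Φ k).mulVec (x k)) ≤
      Real.exp (-β * (l k : ℝ) * T) * (x k ⬝ᵥ P.mulVec (x k)))
    (τ : ℕ → ℝ) (hτ : ∀ k, τ k = T * ∑ j ∈ Finset.range k, (l j : ℝ)) :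
    ∀ k, ‖x k‖ ≤ Real.sqrt ((⨆ i, hP.1.eigenvalues i) / (⨅ i, hP.1.eigenvalues i)) *
      Real.exp (-(β / 2) * τ k) * ‖x 0‖ := by
  have : Nonempty (Fin n) := ⟨⟨0, hn⟩⟩
  intro k
  refine hP.norm_le_of_dotProduct_mulVec_le (Real.exp_nonneg _) ?_
  have hlyap := le_exp_neg_sum_mul_of_le_exp_neg_mul (V := fun k ↦ x k ⬝ᵥ P *ᵥ x k)
    (a := fun j ↦ β * T * l j) (fun k ↦ by simpa [hx k, mul_right_comm] using hdec k) k
  convert hlyap using 3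
  rw [← Real.exp_nat_mul, hτ k, ← Finset.mul_sum]
  ring_nf

/-- Exponential-stability conclusion of Proposition 1: the per-horizon Lyapunov decrease
implies `‖x_k‖ ≤ √(λ_max(P)/λ_min(P)) · e^{−(β/2) τ_k} · ‖x_0‖`. -/
theorem stmt1 (n : ℕ) (hn : 1 ≤ n) (β T : ℝ) (hβ : 0 < β) (hT : 0 < T)
    (P : Matrix (Fin n) (Fin n) ℝ) (hP : P.PosDef)
    (l : ℕ → ℕ) (hl : ∀ k, 0 < l k)
    (Φ : ℕ → Matrix (Fin n) (Fin n) ℝ)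
    (x : ℕ → EuclideanSpace ℝ (Fin n))
    (hx : ∀ k, x (k + 1) = (WithLp.toLp 2 ((Φ k).mulVec (x k)) : EuclideanSpace ℝ (Fin n)))
    (hdec : ∀ k, ((Φ k).mulVec (x k)) ⬝ᵥ P.mulVec ((Φ k).mulVec (x k)) ≤
      Real.exp (-β * (l k : ℝ) * T) * (x k ⬝ᵥ P.mulVec (x k)))
    (τ : ℕ → ℝ) (hτ : ∀ k, τ k = T * ∑ j ∈ Finset.range k, (l j : ℝ)) :
    ∀ k, ‖x k‖ ≤ Real.sqrt ((⨆ i, hP.1.eigenvalues i) / (⨅ i, hP.1.eigenvalues i)) *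
      Real.exp (-(β / 2) * τ k) * ‖x 0‖ :=
  stmt1_general n hn β T P hP l Φ x hx hdec τ hτ
end

section
/- Let n ≥ 1, let P and M be real symmetric positive definite n×n matrices, and let Φ be a real n×n matrix. Then for all x, w ∈ ℝ^n, (Φx + w)ᵀ P (Φx + w) ≤ xᵀ Φᵀ (P + M) Φ x + ‖w‖² · λ_max(P M⁻¹ P + P), where λ_max denotes the largest eigenvalue of the real symmetric matrix P M⁻¹ P + P and ‖·‖ is the Euclidean norm. -/
open Matrix

/-!
Expand the quadratic form at `y + w` with `y = Φ x`. Completing the square with the weight `M`,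
`0 ≤ (y - M⁻¹ P w)ᵀ M (y - M⁻¹ P w)`, bounds the cross term `2 (P w)ᵀ y` by
`yᵀ M y + wᵀ P M⁻¹ P w`.
What is left of `w` is `wᵀ (P M⁻¹ P + P) w`, and a symmetric matrix `A` satisfies
`A ≤ λ_max(A) • 1` in the Loewner order.
-/

/-- The identity map from plain vectors to Euclidean space (type synonym conversion). -/
noncomputable def toE {n : ℕ} (v : Fin n → ℝ) : EuclideanSpace ℝ (Fin n) :=
  (WithLp.equiv 2 (Fin n → ℝ)).symm v

namespace Matrix

variable {n R : Type*} [Fintype n]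

lemma IsSymm.mulVec_dotProduct [CommSemiring R] {A : Matrix n n R} (hA : A.IsSymm)
    (u v : n → R) : A *ᵥ u ⬝ᵥ v = u ⬝ᵥ A *ᵥ v := by
  rw [dotProduct_comm, dotProduct_mulVec, ← mulVec_transpose, hA.eq, dotProduct_comm]

lemma IsSymm.add_dotProduct_mulVec_add [CommRing R] {A : Matrix n n R} (hA : A.IsSymm)
    (u v : n → R) :
    (u + v) ⬝ᵥ A *ᵥ (u + v) = u ⬝ᵥ A *ᵥ u + 2 * (A *ᵥ v ⬝ᵥ u) + v ⬝ᵥ A *ᵥ v := by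
  rw [add_dotProduct, mulVec_add, dotProduct_add, dotProduct_add, dotProduct_comm u (A *ᵥ v),
    ← hA.mulVec_dotProduct v u]
  ring

variable [DecidableEq n]

lemma PosDef.two_mul_dotProduct_le {M : Matrix n n ℝ} (hM : M.PosDef) (u y : n → ℝ) :
    2 * (u ⬝ᵥ y) ≤ y ⬝ᵥ M *ᵥ y + u ⬝ᵥ M⁻¹ *ᵥ u := by
  have hMs : M.IsSymm := isHermitian_iff_isSymm.mp hM.isHermitian
  have hMinv : M *ᵥ (M⁻¹ *ᵥ u) = u := by
    rw [mulVec_mulVec, mul_nonsing_inv _ (isUnit_iff_ne_zero.mpr hM.det_pos.ne'), one_mulVec]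
  have hMinv_dot : M⁻¹ *ᵥ u ⬝ᵥ M *ᵥ y = u ⬝ᵥ y := by rw [← hMs.mulVec_dotProduct, hMinv]
  have hsq := hM.posSemidef.dotProduct_mulVec_nonneg (y - M⁻¹ *ᵥ u)
  rw [star_trivial, mulVec_sub, hMinv, sub_dotProduct, dotProduct_sub, dotProduct_sub, hMinv_dot,
    dotProduct_comm y u, dotProduct_comm (M⁻¹ *ᵥ u) u] at hsq
  linarith

open scoped MatrixOrder in
lemma IsHermitian.dotProduct_mulVec_le_iSup_eigenvalues {A : Matrix n n ℝ} (hA : A.IsHermitian)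
    (w : n → ℝ) : w ⬝ᵥ A *ᵥ w ≤ (w ⬝ᵥ w) * ⨆ i, hA.eigenvalues i := by
  have hle : A ≤ algebraMap ℝ _ (⨆ i, hA.eigenvalues i) := by
    rw [le_algebraMap_iff_spectrum_le hA.isSelfAdjoint, hA.spectrum_real_eq_range_eigenvalues]
    rintro _ ⟨i, rfl⟩
    exact le_ciSup (Set.finite_range _).bddAbove i
  have := (le_iff.mp hle).dotProduct_mulVec_nonneg w
  rw [star_trivial, sub_mulVec, dotProduct_sub, Algebra.algebraMap_eq_smul_one, smul_mulVec,
    one_mulVec, dotProduct_smul, smul_eq_mul] at this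
  linarith

end Matrix

theorem stmt8_general (n : ℕ) (P M : Matrix (Fin n) (Fin n) ℝ)
    (hP : P.PosDef) (hM : M.PosDef) (Φ : Matrix (Fin n) (Fin n) ℝ)
    (hH : (P * M⁻¹ * P + P).IsHermitian) :
    ∀ x w : EuclideanSpace ℝ (Fin n),
      (toE (Φ.mulVec x) + w) ⬝ᵥ P.mulVec (toE (Φ.mulVec x) + w) ≤
        (Φ.mulVec x) ⬝ᵥ (P + M).mulVec (Φ.mulVec x) +
          ‖w‖ ^ 2 * (⨆ i, hH.eigenvalues i) := by
  intro x w
  obtain ⟨v, rfl⟩ : ∃ v, toE v = w := ⟨w.ofLp, rfl⟩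
  have hPs : P.IsSymm := isHermitian_iff_isSymm.mp hP.isHermitian
  have hnorm : ‖toE v‖ ^ 2 = v ⬝ᵥ v := by
    rw [← real_inner_self_eq_norm_sq]
    rfl
  have hweighted : P *ᵥ v ⬝ᵥ M⁻¹ *ᵥ (P *ᵥ v) = v ⬝ᵥ (P * M⁻¹ * P) *ᵥ v := by
    rw [hPs.mulVec_dotProduct, mulVec_mulVec, mulVec_mulVec, mul_assoc]
  have hcross := hM.two_mul_dotProduct_le (P *ᵥ v) (Φ *ᵥ x)
  have hray := hH.dotProduct_mulVec_le_iSup_eigenvalues v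
  rw [add_mulVec, dotProduct_add] at hray
  change (Φ *ᵥ x + v) ⬝ᵥ P *ᵥ (Φ *ᵥ x + v) ≤ _
  rw [hPs.add_dotProduct_mulVec_add, add_mulVec, dotProduct_add, hnorm]
  linarith

/-- One-step Lyapunov upper bound (equations (51)–(53)) of Proposition 3:
`(Φx + w)ᵀ P (Φx + w) ≤ xᵀ Φᵀ (P + M) Φ x + ‖w‖² λ_max(P M⁻¹ P + P)`. -/
theorem stmt8 (n : ℕ) (hn : 1 ≤ n) (P M : Matrix (Fin n) (Fin n) ℝ)
    (hP : P.PosDef) (hM : M.PosDef) (Φ : Matrix (Fin n) (Fin n) ℝ)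
    (hH : (P * M⁻¹ * P + P).IsHermitian) :
    ∀ x w : EuclideanSpace ℝ (Fin n),
      (toE (Φ.mulVec x) + w) ⬝ᵥ P.mulVec (toE (Φ.mulVec x) + w) ≤
        (Φ.mulVec x) ⬝ᵥ (P + M).mulVec (Φ.mulVec x) +
          ‖w‖ ^ 2 * (⨆ i, hH.eigenvalues i) :=
  stmt8_general n P M hP hM Φ hH
end

section
/- Let n ≥ 1, let P and M be real symmetric positive definite n×n matrices, let Φ be a real n×n matrix, and let γ > 0, χ > 0 and ρ > 0. Suppose (i) Φᵀ (P + M) Φ − (ρ − γ) P is negative semidefinite, and (ii) the block matrix [[M, P], [P, (γ/χ)I − P]] is positive semidefinite. Then for every x ∈ ℝ^n, −xᵀ Φᵀ (P + M) Φ x + (ρ − γ)·xᵀ P x − χ · λ_max(P M⁻¹ P + P) + γ ≥ 0. -/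
open Matrix

/-!
Read the first LMI as a quadratic-form inequality at `x`, which bounds the first two terms
below by `0`. Because `M` is positive definite, the second LMI is equivalent (Schur complement)
to `P M⁻¹ P + P ≤ (γ / χ) I` in the Loewner order, so every eigenvalue of `P M⁻¹ P + P`,
and hence the largest one, is at most `γ / χ`; this makes the last two terms nonnegative.
-/

section

variable {n m : Type*} [Fintype n] [Fintype m]

theorem Matrix.PosSemidef.dotProduct_mulVec_le {R : Type*} [CommRing R] [PartialOrder R]
    [StarRing R] [IsOrderedAddMonoid R] {A B : Matrix n n R} (h : (B - A).PosSemidef)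
    (x : n → R) : star x ⬝ᵥ A *ᵥ x ≤ star x ⬝ᵥ B *ᵥ x := by
  simpa only [sub_mulVec, dotProduct_sub, sub_nonneg] using h.dotProduct_mulVec_nonneg x

theorem Matrix.dotProduct_transpose_mul_mul_mulVec {R : Type*} [CommSemiring R]
    (A : Matrix m m R) (B : Matrix m n R) (x : n → R) :
    x ⬝ᵥ (Bᵀ * A * B) *ᵥ x = B *ᵥ x ⬝ᵥ A *ᵥ (B *ᵥ x) := by
  rw [← mulVec_mulVec, ← mulVec_mulVec, dotProduct_mulVec, vecMul_transpose]

open scoped ComplexOrder in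
theorem Matrix.IsHermitian.eigenvalues_le_of_posSemidef_smul_one_sub {𝕜 : Type*} [RCLike 𝕜]
    [DecidableEq n] {A : Matrix n n 𝕜} (hA : A.IsHermitian) {c : ℝ}
    (h : (c • 1 - A).PosSemidef) (i : n) : hA.eigenvalues i ≤ c := by
  have hv : star ⇑(hA.eigenvectorBasis i) ⬝ᵥ ⇑(hA.eigenvectorBasis i) = (1 : 𝕜) := by
    rw [dotProduct_comm, ← EuclideanSpace.inner_eq_star_dotProduct,
      inner_self_eq_norm_sq_to_K, hA.eigenvectorBasis.orthonormal.1 i]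
    simp
  have := h.dotProduct_mulVec_le (hA.eigenvectorBasis i)
  simp only [hA.mulVec_eigenvectorBasis, smul_mulVec, one_mulVec, dotProduct_smul, hv] at this
  simpa only [Algebra.smul_def, mul_one, RCLike.algebraMap_eq_ofReal, RCLike.ofReal_le_ofReal]
    using this

end

theorem stmt10_general (n : ℕ) (P M Φ : Matrix (Fin n) (Fin n) ℝ)
    (hP : P.PosDef) (hM : M.PosDef)
    (γ χ ρ : ℝ) (hγ : 0 < γ) (hχ : 0 < χ)
    (hH : (P * M⁻¹ * P + P).IsHermitian)
    (h1 : (-(Φᵀ * (P + M) * Φ - (ρ - γ) • P)).PosSemidef)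
    (h2 : (Matrix.fromBlocks M P P
      ((γ / χ) • (1 : Matrix (Fin n) (Fin n) ℝ) - P)).PosSemidef) :
    ∀ x : Fin n → ℝ,
      0 ≤ -((Φ.mulVec x) ⬝ᵥ (P + M).mulVec (Φ.mulVec x))
        + (ρ - γ) * (x ⬝ᵥ P.mulVec x) - χ * (⨆ i, hH.eigenvalues i) + γ := by
  intro x
  have hquad : Φ *ᵥ x ⬝ᵥ (P + M) *ᵥ (Φ *ᵥ x) ≤ (ρ - γ) * (x ⬝ᵥ P *ᵥ x) := by
    have := (neg_sub (Φᵀ * (P + M) * Φ) _ ▸ h1).dotProduct_mulVec_le x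
    rwa [star_trivial, dotProduct_transpose_mul_mul_mulVec, smul_mulVec, dotProduct_smul,
      smul_eq_mul] at this
  have : Invertible M := hM.isUnit.invertible
  have hschur : ((γ / χ) • 1 - (P * M⁻¹ * P + P)).PosSemidef := by
    have h2' : (fromBlocks M P Pᴴ ((γ / χ) • 1 - P)).PosSemidef := by rwa [hP.1]
    have := (PosDef.fromBlocks₁₁ P _ hM).mp h2'
    rwa [hP.1, sub_sub, add_comm] at this
  have hsup : ⨆ i, hH.eigenvalues i ≤ γ / χ :=
    Real.iSup_le (hH.eigenvalues_le_of_posSemidef_smul_one_sub hschur) (by positivity)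
  have := (le_div_iff₀' hχ).mp hsup
  linarith

/-- Feasibility claim in the proof of Proposition 3: the offline LMIs (45)–(46) imply
that the quadratic triggering condition `(x,1)ᵀ U_{σ*} (x,1) ≥ 0` holds for every
state `x`. -/
theorem stmt10 (n : ℕ) (hn : 1 ≤ n) (P M Φ : Matrix (Fin n) (Fin n) ℝ)
    (hP : P.PosDef) (hM : M.PosDef)
    (γ χ ρ : ℝ) (hγ : 0 < γ) (hχ : 0 < χ) (hρ : 0 < ρ)
    (hH : (P * M⁻¹ * P + P).IsHermitian)
    (h1 : (-(Φᵀ * (P + M) * Φ - (ρ - γ) • P)).PosSemidef)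
    (h2 : (Matrix.fromBlocks M P P
      ((γ / χ) • (1 : Matrix (Fin n) (Fin n) ℝ) - P)).PosSemidef) :
    ∀ x : Fin n → ℝ,
      0 ≤ -((Φ.mulVec x) ⬝ᵥ (P + M).mulVec (Φ.mulVec x))
        + (ρ - γ) * (x ⬝ᵥ P.mulVec x) - χ * (⨆ i, hH.eigenvalues i) + γ :=
  stmt10_general n P M Φ hP hM γ χ ρ hγ hχ hH h1 h2
end

section
/- Let n ≥ 1, let P be a real symmetric positive definite n×n matrix, Φ a real n×n matrix, and γ₁ > 0, γ₂ > 0, ρ > 0, θ > 0. Suppose the symmetric (2n+1)×(2n+1) block matrix U = [[−Φᵀ P Φ + (ρ − γ₁)P, −Φᵀ P, 0], [−P Φ, (γ₂/θ)I − P, 0], [0, 0, γ₁ − γ₂]] is positive semidefinite. Then for every x ∈ ℝ^n with xᵀ P x ≥ 1 and every w ∈ ℝ^n with ‖w‖² ≤ θ, one has (Φx + w)ᵀ P (Φx + w) ≤ ρ · xᵀ P x. -/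
/-!
S-procedure: the quadratic form of `U` at `(x, w, 1)` equals
`ρ xᵀPx − (Φx + w)ᵀP(Φx + w) − γ₁ (xᵀPx − 1) − (γ₂ − (γ₂/θ) ‖w‖²)`.
Under the constraints `xᵀPx ≥ 1` and `‖w‖² ≤ θ` both multiplier terms are nonnegative,
so positive semidefiniteness of `U` yields the decrease.
-/

open Matrix

namespace Matrix

variable {l m R : Type*} [Fintype l] [Fintype m] [NonUnitalNonAssocSemiring R]

theorem sumElim_dotProduct_fromBlocks_mulVec_sumElim (A : Matrix l l R) (B : Matrix l m R)
    (C : Matrix m l R) (D : Matrix m m R) (x : l → R) (y : m → R) :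
    Sum.elim x y ⬝ᵥ fromBlocks A B C D *ᵥ Sum.elim x y =
      x ⬝ᵥ A *ᵥ x + x ⬝ᵥ B *ᵥ y + (y ⬝ᵥ C *ᵥ x + y ⬝ᵥ D *ᵥ y) := by
  simp only [fromBlocks_mulVec, Sum.elim_comp_inl, Sum.elim_comp_inr, sumElim_dotProduct_sumElim,
    dotProduct_add]

end Matrix

section SProcedure

variable {ι : Type*} [Fintype ι] [DecidableEq ι]

noncomputable def sProcedureMatrix (P Φ : Matrix ι ι ℝ) (γ₁ γ₂ ρ θ : ℝ) :
    Matrix ((ι ⊕ ι) ⊕ Unit) ((ι ⊕ ι) ⊕ Unit) ℝ :=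
  fromBlocks
    (fromBlocks (-(Φᵀ * P * Φ) + (ρ - γ₁) • P) (-(Φᵀ * P))
      (-(P * Φ)) ((γ₂ / θ) • (1 : Matrix ι ι ℝ) - P))
    0 0 ((γ₁ - γ₂) • (1 : Matrix Unit Unit ℝ))

theorem sumElim_dotProduct_sProcedureMatrix_mulVec (P Φ : Matrix ι ι ℝ) (γ₁ γ₂ ρ θ : ℝ)
    (x w : ι → ℝ) :
    Sum.elim (Sum.elim x w) 1 ⬝ᵥ sProcedureMatrix P Φ γ₁ γ₂ ρ θ *ᵥ Sum.elim (Sum.elim x w) 1 =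
      ρ * (x ⬝ᵥ P *ᵥ x) - (Φ *ᵥ x + w) ⬝ᵥ P *ᵥ (Φ *ᵥ x + w)
        - γ₁ * (x ⬝ᵥ P *ᵥ x - 1) - (γ₂ - γ₂ / θ * (w ⬝ᵥ w)) := by
  have hΦPΦ : x ⬝ᵥ (Φᵀ * P * Φ) *ᵥ x = Φ *ᵥ x ⬝ᵥ P *ᵥ (Φ *ᵥ x) := by
    rw [← mulVec_mulVec, ← mulVec_mulVec, dotProduct_transpose_mulVec, dotProduct_comm]
  have hΦP : x ⬝ᵥ (Φᵀ * P) *ᵥ w = Φ *ᵥ x ⬝ᵥ P *ᵥ w := by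
    rw [← mulVec_mulVec, dotProduct_transpose_mulVec, dotProduct_comm]
  have hPΦ : w ⬝ᵥ (P * Φ) *ᵥ x = w ⬝ᵥ P *ᵥ (Φ *ᵥ x) := by rw [mulVec_mulVec]
  have hunit : (1 : Unit → ℝ) ⬝ᵥ 1 = 1 := by simp [dotProduct]
  simp only [sProcedureMatrix, sumElim_dotProduct_fromBlocks_mulVec_sumElim, neg_mulVec,
    add_mulVec, sub_mulVec, smul_mulVec, one_mulVec, zero_mulVec, dotProduct_neg, dotProduct_add,
    dotProduct_sub, dotProduct_smul, dotProduct_zero, smul_eq_mul, hΦPΦ, hΦP, hPΦ, hunit,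
    mulVec_add, add_dotProduct]
  ring

theorem dotProduct_mulVec_le_of_posSemidef_sProcedureMatrix {P Φ : Matrix ι ι ℝ}
    {γ₁ γ₂ ρ θ : ℝ} (hU : (sProcedureMatrix P Φ γ₁ γ₂ ρ θ).PosSemidef) (hγ₁ : 0 ≤ γ₁)
    (hγ₂ : 0 ≤ γ₂) {x w : ι → ℝ} (hx : 1 ≤ x ⬝ᵥ P *ᵥ x) (hw : w ⬝ᵥ w ≤ θ) :
    (Φ *ᵥ x + w) ⬝ᵥ P *ᵥ (Φ *ᵥ x + w) ≤ ρ * (x ⬝ᵥ P *ᵥ x) := by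
  have hU_nonneg := hU.dotProduct_mulVec_nonneg (Sum.elim (Sum.elim x w) 1)
  rw [star_trivial, sumElim_dotProduct_sProcedureMatrix_mulVec] at hU_nonneg
  have hx_term : 0 ≤ γ₁ * (x ⬝ᵥ P *ᵥ x - 1) := mul_nonneg hγ₁ (sub_nonneg.2 hx)
  have hθ : 0 ≤ θ := le_trans (by simpa using dotProduct_self_star_nonneg w) hw
  have hw_term : γ₂ / θ * (w ⬝ᵥ w) ≤ γ₂ := by
    rw [div_mul_comm]
    exact mul_le_of_le_one_left hγ₂ (div_le_one_of_le₀ hw hθ)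
  linarith

end SProcedure

theorem stmt14_general (n : ℕ) (P Φ : Matrix (Fin n) (Fin n) ℝ)
    (γ₁ γ₂ ρ θ : ℝ) (hγ₁ : 0 < γ₁) (hγ₂ : 0 < γ₂)
    (hU : (Matrix.fromBlocks
        (Matrix.fromBlocks (-(Φᵀ * P * Φ) + (ρ - γ₁) • P) (-(Φᵀ * P))
          (-(P * Φ)) ((γ₂ / θ) • (1 : Matrix (Fin n) (Fin n) ℝ) - P))
        0 0 ((γ₁ - γ₂) • (1 : Matrix Unit Unit ℝ))).PosSemidef) :
    ∀ x w : EuclideanSpace ℝ (Fin n), 1 ≤ x ⬝ᵥ P.mulVec x → ‖w‖ ^ 2 ≤ θ →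
      (toE (Φ.mulVec x) + w) ⬝ᵥ P.mulVec (toE (Φ.mulVec x) + w) ≤
        ρ * (x ⬝ᵥ P.mulVec x) := by
  intro x w hx hw
  have hU' : (sProcedureMatrix P Φ γ₁ γ₂ ρ θ).PosSemidef := hU
  have hw_norm : ‖w‖ ^ 2 = w ⬝ᵥ w := by
    rw [← real_inner_self_eq_norm_sq, EuclideanSpace.inner_eq_star_dotProduct, star_trivial]
  exact dotProduct_mulVec_le_of_posSemidef_sProcedureMatrix hU' hγ₁.le hγ₂.le hx (hw_norm ▸ hw)

/-- S-procedure per-step claim in the proof of Proposition 4: positive semidefiniteness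
of the `(2n+1)×(2n+1)` block matrix `U` implies the per-step Lyapunov decrease
`(Φx + w)ᵀ P (Φx + w) ≤ ρ xᵀ P x` for all `x` with `xᵀ P x ≥ 1` and all `w` with
`‖w‖² ≤ θ`. -/
theorem stmt14 (n : ℕ) (hn : 1 ≤ n) (P Φ : Matrix (Fin n) (Fin n) ℝ) (hP : P.PosDef)
    (γ₁ γ₂ ρ θ : ℝ) (hγ₁ : 0 < γ₁) (hγ₂ : 0 < γ₂) (hρ : 0 < ρ) (hθ : 0 < θ)
    (hU : (Matrix.fromBlocks
        (Matrix.fromBlocks (-(Φᵀ * P * Φ) + (ρ - γ₁) • P) (-(Φᵀ * P))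
          (-(P * Φ)) ((γ₂ / θ) • (1 : Matrix (Fin n) (Fin n) ℝ) - P))
        0 0 ((γ₁ - γ₂) • (1 : Matrix Unit Unit ℝ))).PosSemidef) :
    ∀ x w : EuclideanSpace ℝ (Fin n), 1 ≤ x ⬝ᵥ P.mulVec x → ‖w‖ ^ 2 ≤ θ →
      (toE (Φ.mulVec x) + w) ⬝ᵥ P.mulVec (toE (Φ.mulVec x) + w) ≤
        ρ * (x ⬝ᵥ P.mulVec x) :=
  stmt14_general n P Φ γ₁ γ₂ ρ θ hγ₁ hγ₂ hU
end
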